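/- Let F be a field of characteristic 2 and let α, β, a, b ∈ F with β ≠ 0. Then there is an F-algebra isomorphism [α, β) ≅ [α + a² + a + b²·β, β). -/

import Mathlib

open scoped TensorProduct

/-- The relations defining the characteristic two quaternion symbol algebra `[α, β)`:
`x² + x = α`, `y² = β`, `xy + yx = y`. -/
inductive QuatSymbolRel (F : Type*) [CommRing F] (α β : F) :
    FreeAlgebra F (Fin 2) → FreeAlgebra F (Fin 2) → Prop
  | x_rel : QuatSymbolRel F α β
      (FreeAlgebra.ι F (0 : Fin 2) * FreeAlgebra.ι F (0 : Fin 2) + FreeAlgebra.ι F (0 : Fin 2))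
      (algebraMap F (FreeAlgebra F (Fin 2)) α)
  | y_rel : QuatSymbolRel F α β
      (FreeAlgebra.ι F (1 : Fin 2) * FreeAlgebra.ι F (1 : Fin 2))
      (algebraMap F (FreeAlgebra F (Fin 2)) β)
  | xy_rel : QuatSymbolRel F α β
      (FreeAlgebra.ι F (0 : Fin 2) * FreeAlgebra.ι F (1 : Fin 2) +
        FreeAlgebra.ι F (1 : Fin 2) * FreeAlgebra.ι F (0 : Fin 2))
      (FreeAlgebra.ι F (1 : Fin 2))

/-- The characteristic two quaternion symbol algebra `[α, β)` over `F`: the `F`-algebra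
generated by `x, y` subject to `x² + x = α`, `y² = β`, `xy + yx = y`. -/
def QuatSymbol (F : Type*) [CommRing F] (α β : F) :=
  RingQuot (QuatSymbolRel F α β)

noncomputable instance (F : Type*) [CommRing F] (α β : F) : Ring (QuatSymbol F α β) :=
  inferInstanceAs (Ring (RingQuot (QuatSymbolRel F α β)))

noncomputable instance (F : Type*) [CommRing F] (α β : F) : Algebra F (QuatSymbol F α β) :=
  inferInstanceAs (Algebra F (RingQuot (QuatSymbolRel F α β)))

/-!
Substituting `x ↦ x + a + b y`, `y ↦ y` preserves `y² = β` and `xy + yx = y`, and turns `x² + x`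
into `α + a² + a + b²β` because the cross terms `a x + x a` and `b (xy + yx) + b y` vanish in
characteristic two. For the same reason this substitution is an involution, so the induced
homomorphisms between the two symbol algebras are mutually inverse.
-/

namespace QuatSymbol

section Presentation

variable (F : Type*) [CommRing F] (α β : F)

noncomputable def x : QuatSymbol F α β :=
  RingQuot.mkAlgHom F (QuatSymbolRel F α β) (FreeAlgebra.ι F 0)

noncomputable def y : QuatSymbol F α β :=
  RingQuot.mkAlgHom F (QuatSymbolRel F α β) (FreeAlgebra.ι F 1)

variable {F} {A : Type*} [Ring A] [Algebra F A]

structure Relations (X Y : A) : Prop where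
  x_mul_x_add_x : X * X + X = algebraMap F A α
  y_mul_y : Y * Y = algebraMap F A β
  x_mul_y_add_y_mul_x : X * Y + Y * X = Y

theorem relations_x_y : Relations α β (x F α β) (y F α β) where
  x_mul_x_add_x := by
    have h := RingQuot.mkAlgHom_rel F (QuatSymbolRel.x_rel (α := α) (β := β))
    simp only [map_add, map_mul, AlgHom.commutes] at h
    exact h
  y_mul_y := by
    have h := RingQuot.mkAlgHom_rel F (QuatSymbolRel.y_rel (α := α) (β := β))
    simp only [map_mul, AlgHom.commutes] at h
    exact h
  x_mul_y_add_y_mul_x := by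
    have h := RingQuot.mkAlgHom_rel F (QuatSymbolRel.xy_rel (α := α) (β := β))
    simp only [map_add, map_mul] at h
    exact h

variable {α β}

noncomputable def lift {X Y : A} (h : Relations α β X Y) : QuatSymbol F α β →ₐ[F] A :=
  RingQuot.liftAlgHom F ⟨FreeAlgebra.lift F ![X, Y], fun _ _ r => by
    cases r <;> simp [h.x_mul_x_add_x, h.y_mul_y, h.x_mul_y_add_y_mul_x]⟩

@[simp]
theorem lift_x {X Y : A} (h : Relations α β X Y) : lift h (x F α β) = X :=
  (RingQuot.liftAlgHom_mkAlgHom_apply ..).trans (FreeAlgebra.lift_ι_apply ..)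

@[simp]
theorem lift_y {X Y : A} (h : Relations α β X Y) : lift h (y F α β) = Y :=
  (RingQuot.liftAlgHom_mkAlgHom_apply ..).trans (FreeAlgebra.lift_ι_apply ..)

@[ext]
theorem algHom_ext {f g : QuatSymbol F α β →ₐ[F] A} (hx : f (x F α β) = g (x F α β))
    (hy : f (y F α β) = g (y F α β)) : f = g := by
  refine RingQuot.ringQuot_ext' F _ _ (FreeAlgebra.hom_ext (funext fun i => ?_))
  fin_cases i
  exacts [hx, hy]

end Presentation

variable {F : Type*} [CommRing F] [CharP F 2] {A : Type*} [Ring A] [Algebra F A]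

theorem Relations.shift {α β : F} {X Y : A} (h : Relations α β X Y) (a b : F) :
    Relations (α + a ^ 2 + a + b ^ 2 * β) β (X + a • 1 + b • Y) Y := by
  obtain ⟨hx, hy, hxy⟩ := h
  refine ⟨?_, hy, ?_⟩ <;>
    simp only [Algebra.algebraMap_eq_smul_one, add_mul, mul_add, smul_mul_assoc, mul_smul_comm,
      smul_smul, one_mul, mul_one, smul_add, add_smul] at hx hy hxy ⊢
  · linear_combination (norm := module) hx + b ^ 2 • hy + b • hxy +
      CharTwo.two_eq_zero (R := F) • (a • X + (a * b) • Y + b • Y)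
  · linear_combination (norm := module) hxy + CharTwo.two_eq_zero (R := F) • (a • Y + b • (Y * Y))

noncomputable def shiftHom {α α' β : F} (a b : F) (h : α' + a ^ 2 + a + b ^ 2 * β = α) :
    QuatSymbol F α β →ₐ[F] QuatSymbol F α' β :=
  lift (h ▸ (relations_x_y α' β).shift a b)

theorem shiftHom_comp_shiftHom {α α' β : F} (a b : F) (h : α' + a ^ 2 + a + b ^ 2 * β = α)
    (h' : α + a ^ 2 + a + b ^ 2 * β = α') :
    (shiftHom a b h').comp (shiftHom a b h) = AlgHom.id F (QuatSymbol F α β) := by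
  ext
  · simp only [shiftHom, AlgHom.comp_apply, lift_x, lift_y, map_add, map_smul, map_one,
      AlgHom.id_apply]
    linear_combination (norm := module) CharTwo.two_eq_zero (R := F) • (a • 1 + b • y F α β)
  · simp [shiftHom]

noncomputable def shiftEquiv (α β a b : F) :
    QuatSymbol F α β ≃ₐ[F] QuatSymbol F (α + a ^ 2 + a + b ^ 2 * β) β :=
  have h : α + a ^ 2 + a + b ^ 2 * β + a ^ 2 + a + b ^ 2 * β = α := by
    linear_combination (a ^ 2 + a + b ^ 2 * β) * CharTwo.two_eq_zero (R := F)
  AlgEquiv.ofAlgHom (shiftHom a b h) (shiftHom a b rfl)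
    (shiftHom_comp_shiftHom a b rfl h) (shiftHom_comp_shiftHom a b h rfl)

end QuatSymbol

theorem quatSymbol_lambda1_separable_general (F : Type*) [Field F] [CharP F 2] (α β a b : F) :
    Nonempty (QuatSymbol F α β ≃ₐ[F] QuatSymbol F (α + a ^ 2 + a + b ^ 2 * β) β) :=
  ⟨QuatSymbol.shiftEquiv α β a b⟩

/-- A `Λ₁` step on one symbol: `[α,β) ≅ [α + a² + a + b²β, β)`. -/
theorem quatSymbol_lambda1_separable (F : Type*) [Field F] [CharP F 2] (α β a b : F)
    (hβ : β ≠ 0) :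
    Nonempty (QuatSymbol F α β ≃ₐ[F] QuatSymbol F (α + a ^ 2 + a + b ^ 2 * β) β) :=
  quatSymbol_lambda1_separable_general F α β a b
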